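/- Let w and w' be two Coxeter elements of the toggle group of I_n, i.e., w = τ_{σ(n)} ∘ ⋯ ∘ τ_{σ(1)} and w' = τ_{σ'(n)} ∘ ⋯ ∘ τ_{σ'(1)} for permutations σ, σ' of {1,…,n}. Let f : I_n → ℚ be any linear combination of the indicator statistics, f(S) = ∑_{j∈S} c_j for fixed rational coefficients c_1,…,c_n, and let c ∈ ℚ. Then f is c-mesic under the action of w if and only if f is c-mesic under the action of w'. (Here f is c-mesic under an invertible map u : I_n → I_n means: for every S ∈ I_n and every m ≥ 1 with u^m(S) = S, ∑_{i=0}^{m−1} f(u^i(S)) = c·m.) -/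

import Mathlib

/-- An independent set of the path graph `P_n` (vertices `1,…,n`, edges `{i,i+1}`):
a subset of `{1,…,n}` containing no two adjacent vertices. -/
def IndepSet (n : ℕ) (S : Finset ℕ) : Prop :=
  S ⊆ Finset.Icc 1 n ∧ ∀ i ∈ S, i + 1 ∉ S

instance (n : ℕ) (S : Finset ℕ) : Decidable (IndepSet n S) := by
  unfold IndepSet; infer_instance

/-- The toggle `τ_i` acting on independent sets of the path graph `P_n`. -/
def toggle (n i : ℕ) (S : Finset ℕ) : Finset ℕ :=
  if i ∈ S then S.erase i
  else if IndepSet n (insert i S) then insert i S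
  else S

/-- `φ = τ_n ∘ ⋯ ∘ τ_2 ∘ τ_1` (toggle at each vertex from left to right). -/
def phi (n : ℕ) (S : Finset ℕ) : Finset ℕ :=
  (List.range n).foldl (fun T k => toggle n (k + 1) T) S

/-- `φ⁻¹ = τ_1 ∘ τ_2 ∘ ⋯ ∘ τ_n` (toggle at each vertex from right to left). -/
def phiInv (n : ℕ) (S : Finset ℕ) : Finset ℕ :=
  (List.range n).foldr (fun k T => toggle n (k + 1) T) S

/-- The Coxeter element `w = τ_{σ(n)} ∘ ⋯ ∘ τ_{σ(1)}` of the toggle group determined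
by a permutation `σ` of `{1,…,n}` (here 0-indexed via `Fin n`). -/
def coxeter (n : ℕ) (σ : Equiv.Perm (Fin n)) (S : Finset ℕ) : Finset ℕ :=
  (List.ofFn fun i : Fin n => (σ i : ℕ) + 1).foldl (fun T k => toggle n k T) S

/-!
A toggle `τ_a` is an involution, and for `a ∉ u` the words `a :: u` and `u ++ [a]` act by
maps conjugate under `τ_a`. Conjugation carries periodic orbits to periodic orbits of the
same length, and along them the statistic `∑_{j ∈ S} c_j` changes only in its `a`-th term,
by `c_a (1_a(w^{i+1} S) - 1_a(w^i S))`; this telescopes to zero over a period, so rotating a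
word preserves homomesy. Toggles at non-adjacent vertices commute, and on a path rotations
together with such commutations connect every ordering of `{1,…,n}` to `1, 2, …, n`.
-/

open Finset

def IsMesic {α R : Type*} [Ring R] (s : Set α) (w : α → α) (f : α → R) (c : R) : Prop :=
  ∀ x ∈ s, ∀ m : ℕ, 1 ≤ m → w^[m] x = x → ∑ i ∈ range m, f (w^[i] x) = c * m

section IsMesic

variable {α R : Type*} [Ring R] {s : Set α} {w w' g : α → α} {f : α → R} {c : R}

lemma Set.EqOn.iterate (hw : Set.MapsTo w s s) (h : Set.EqOn w w' s) (m : ℕ) :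
    Set.EqOn w^[m] w'^[m] s := by
  induction m with
  | zero => exact fun _ _ => rfl
  | succ m ih =>
    intro x hx
    rw [Function.iterate_succ_apply', Function.iterate_succ_apply', ← ih hx]
    exact h (hw.iterate m hx)

lemma isMesic_congr (hw : Set.MapsTo w s s) (h : Set.EqOn w w' s) :
    IsMesic s w f c ↔ IsMesic s w' f c := by
  have hiter := h.iterate hw
  refine forall₂_congr fun x hx => forall₂_congr fun m _ => ?_
  rw [hiter m hx, sum_congr rfl fun i _ => by rw [hiter i hx]]

lemma iterate_conj (hw : Set.MapsTo w s s) (hconj : ∀ x ∈ s, w' (g x) = g (w x)) (m : ℕ)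
    {x : α} (hx : x ∈ s) : w'^[m] (g x) = g (w^[m] x) := by
  induction m with
  | zero => rfl
  | succ m ih =>
    rw [Function.iterate_succ_apply', Function.iterate_succ_apply', ih, hconj _ (hw.iterate m hx)]

lemma sum_orbit_conj (hw : Set.MapsTo w s s) (hconj : ∀ x ∈ s, w' (g x) = g (w x))
    {h : α → R} (hf : ∀ x ∈ s, f (g x) = f x + (h (w x) - h x))
    {x : α} (hx : x ∈ s) {m : ℕ} (hm : w^[m] x = x) :
    ∑ i ∈ range m, f (w'^[i] (g x)) = ∑ i ∈ range m, f (w^[i] x) := by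
  have hcob : ∑ i ∈ range m, (h (w^[i + 1] x) - h (w^[i] x)) = 0 := by
    rw [sum_range_sub (fun i => h (w^[i] x)), hm, Function.iterate_zero_apply, sub_self]
  simp_rw [iterate_conj hw hconj _ hx, hf _ (hw.iterate _ hx), ← Function.iterate_succ_apply' w]
  rw [sum_add_distrib, hcob, add_zero]

lemma isMesic_conj (hw : Set.MapsTo w s s) (hg : Set.MapsTo g s s)
    (hgg : ∀ x ∈ s, g (g x) = x) (hconj : ∀ x ∈ s, w' (g x) = g (w x))
    {h : α → R} (hf : ∀ x ∈ s, f (g x) = f x + (h (w x) - h x)) :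
    IsMesic s w f c ↔ IsMesic s w' f c := by
  constructor
  · intro H y hy m hm hper
    have hx : g y ∈ s := hg hy
    have hperx : w^[m] (g y) = g y := by
      rw [← hgg _ (hw.iterate m hx), ← iterate_conj hw hconj m hx, hgg y hy, hper]
    rw [← hgg y hy, sum_orbit_conj hw hconj hf hx hperx, H _ hx m hm hperx]
  · intro H x hx m hm hper
    have hpery : w'^[m] (g x) = g x := by rw [iterate_conj hw hconj m hx, hper]
    rw [← sum_orbit_conj hw hconj hf hx hper, H _ (hg hx) m hm hpery]

end IsMesic

section Toggle

variable {n : ℕ} {S : Finset ℕ}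

lemma IndepSet.mono {T : Finset ℕ} (hS : IndepSet n S) (h : T ⊆ S) : IndepSet n T :=
  ⟨h.trans hS.1, fun i hi hi' => hS.2 i (h hi) (h hi')⟩

lemma IndepSet.toggle (hS : IndepSet n S) (i : ℕ) : IndepSet n (toggle n i S) := by
  unfold _root_.toggle
  split_ifs with hi hins
  exacts [hS.mono (Finset.erase_subset i S), hins, hS]

lemma mem_toggle_of_ne {i j : ℕ} (hji : j ≠ i) : j ∈ toggle n i S ↔ j ∈ S := by
  unfold toggle
  split_ifs <;> simp [hji]

lemma mem_toggle_self (i : ℕ) : i ∈ toggle n i S ↔ i ∉ S ∧ IndepSet n (insert i S) := by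
  by_cases hi : i ∈ S
  · simp [toggle, hi]
  · by_cases hins : IndepSet n (insert i S) <;> simp [toggle, hi, hins]

lemma toggle_toggle (hS : IndepSet n S) (i : ℕ) : toggle n i (toggle n i S) = S := by
  by_cases hi : i ∈ S
  · simp [toggle, hi, Finset.insert_erase hi, hS]
  · by_cases hins : IndepSet n (insert i S) <;> simp [toggle, hi, hins]

lemma indepSet_insert_iff (hS : IndepSet n S) (x : ℕ) :
    IndepSet n (insert x S) ↔ x ∈ Finset.Icc 1 n ∧ x + 1 ∉ S ∧ x - 1 ∉ S := by
  constructor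
  · intro h
    have hx := h.1 (Finset.mem_insert_self x S)
    refine ⟨hx, fun hsucc => h.2 x (by simp) (by simp [hsucc]),
      fun hpred => h.2 (x - 1) (by simp [hpred]) ?_⟩
    rw [Nat.sub_add_cancel (Finset.mem_Icc.mp hx).1]
    exact Finset.mem_insert_self x S
  · rintro ⟨hx, hsucc, hpred⟩
    refine ⟨Finset.insert_subset hx hS.1, fun i hi hi' => ?_⟩
    rcases Finset.mem_insert.mp hi with rfl | hi <;> rcases Finset.mem_insert.mp hi' with h | h
    · omega
    · exact hsucc h
    · exact hpred (by rw [← h]; simpa using hi)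
    · exact hS.2 i hi h

lemma indepSet_insert_toggle_iff (hS : IndepSet n S) {x y : ℕ} (hne : x ≠ y)
    (hxy : x + 1 ≠ y) (hyx : y + 1 ≠ x) :
    IndepSet n (insert x (toggle n y S)) ↔ IndepSet n (insert x S) := by
  rw [indepSet_insert_iff (hS.toggle y), indepSet_insert_iff hS,
    mem_toggle_of_ne hxy, mem_toggle_of_ne (by omega)]

lemma toggle_comm (hS : IndepSet n S) {x y : ℕ} (hxy : x + 1 ≠ y) (hyx : y + 1 ≠ x) :
    toggle n x (toggle n y S) = toggle n y (toggle n x S) := by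
  obtain rfl | hne := eq_or_ne x y
  · rfl
  ext j
  by_cases hjx : j = x
  · subst hjx
    rw [mem_toggle_self, mem_toggle_of_ne hne, indepSet_insert_toggle_iff hS hne hxy hyx,
      mem_toggle_of_ne hne, mem_toggle_self]
  by_cases hjy : j = y
  · subst hjy
    rw [mem_toggle_of_ne hjx, mem_toggle_self, mem_toggle_self, mem_toggle_of_ne hjx,
      indepSet_insert_toggle_iff hS hjx hyx hxy]
  rw [mem_toggle_of_ne hjx, mem_toggle_of_ne hjy, mem_toggle_of_ne hjy, mem_toggle_of_ne hjx]

lemma sum_toggle {R : Type*} [AddCommGroup R] (cf : ℕ → R) (a : ℕ) (S : Finset ℕ) :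
    ∑ j ∈ toggle n a S, cf j =
      ∑ j ∈ S, cf j + ((if a ∈ toggle n a S then cf a else 0) - if a ∈ S then cf a else 0) := by
  by_cases ha : a ∈ S
  · simp [toggle, ha, Finset.sum_erase_eq_sub ha, sub_eq_add_neg]
  by_cases hins : IndepSet n (insert a S)
  · simp [toggle, ha, hins, Finset.sum_insert ha, add_comm]
  · simp [toggle, ha, hins]

end Toggle

def toggles (n : ℕ) (l : List ℕ) (S : Finset ℕ) : Finset ℕ :=
  l.foldl (fun T k => toggle n k T) S

section Toggles

variable {n : ℕ} {S : Finset ℕ}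

lemma toggles_cons (a : ℕ) (l : List ℕ) (S : Finset ℕ) :
    toggles n (a :: l) S = toggles n l (toggle n a S) := rfl

lemma toggles_append (l l' : List ℕ) (S : Finset ℕ) :
    toggles n (l ++ l') S = toggles n l' (toggles n l S) := List.foldl_append

lemma IndepSet.toggles (hS : IndepSet n S) (l : List ℕ) : IndepSet n (toggles n l S) := by
  induction l generalizing S with
  | nil => exact hS
  | cons a l ih => exact ih (hS.toggle a)

lemma mem_toggles_of_notMem {j : ℕ} {l : List ℕ} (hj : j ∉ l) (S : Finset ℕ) :
    j ∈ toggles n l S ↔ j ∈ S := by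
  induction l generalizing S with
  | nil => rfl
  | cons a l ih =>
    rw [List.mem_cons, not_or] at hj
    rw [toggles_cons, ih hj.2, mem_toggle_of_ne hj.1]

lemma toggles_cons_eq_append_singleton {x : ℕ} {l : List ℕ}
    (h : ∀ y ∈ l, x + 1 ≠ y ∧ y + 1 ≠ x) (hS : IndepSet n S) :
    toggles n (x :: l) S = toggles n (l ++ [x]) S := by
  induction l generalizing S with
  | nil => rfl
  | cons y l ih =>
    have hy := h y List.mem_cons_self
    rw [toggles_cons, toggles_cons, ← toggle_comm hS hy.1 hy.2, ← toggles_cons,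
      ih (fun z hz => h z (List.mem_cons_of_mem y hz)) (hS.toggle y), List.cons_append,
      toggles_cons]

lemma toggles_append_comm {b s : List ℕ} (h : ∀ x ∈ b, ∀ y ∈ s, x + 1 ≠ y ∧ y + 1 ≠ x)
    (hS : IndepSet n S) : toggles n (b ++ s) S = toggles n (s ++ b) S := by
  induction b generalizing S with
  | nil => simp
  | cons x b ih =>
    calc toggles n (x :: b ++ s) S = toggles n (x :: s ++ b) S :=
          ih (fun z hz => h z (List.mem_cons_of_mem x hz)) (hS.toggle x)
      _ = toggles n (s ++ [x] ++ b) S := by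
          rw [toggles_append, toggles_append _ b,
            toggles_cons_eq_append_singleton (h x List.mem_cons_self) hS]
      _ = toggles n (s ++ x :: b) S := by simp

end Toggles

section Mesic

variable {R : Type*} [Ring R] {n : ℕ} {cf : ℕ → R} {c : R}

lemma isMesic_toggles_cons_iff {a : ℕ} {u : List ℕ} (ha : a ∉ u) :
    IsMesic {S | IndepSet n S} (toggles n (a :: u)) (fun S => ∑ j ∈ S, cf j) c ↔
      IsMesic {S | IndepSet n S} (toggles n (u ++ [a])) (fun S => ∑ j ∈ S, cf j) c := by
  refine isMesic_conj (g := toggle n a) (h := fun S => if a ∈ S then cf a else 0)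
    (fun _ hS => hS.toggles _) (fun _ hS => hS.toggle a) (fun S hS => toggle_toggle hS a)
    (fun S _ => by rw [toggles_append, toggles_cons]; rfl) (fun S _ => ?_)
  simp only [toggles_cons, mem_toggles_of_notMem ha]
  exact sum_toggle cf a S

lemma isMesic_toggles_append_comm {b s : List ℕ}
    (h : ∀ x ∈ b, ∀ y ∈ s, x + 1 ≠ y ∧ y + 1 ≠ x) (q : List ℕ) :
    IsMesic {S | IndepSet n S} (toggles n (b ++ s ++ q)) (fun S => ∑ j ∈ S, cf j) c ↔
      IsMesic {S | IndepSet n S} (toggles n (s ++ b ++ q)) (fun S => ∑ j ∈ S, cf j) c :=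
  isMesic_congr (fun _ hS => hS.toggles _) fun S hS => by
    rw [toggles_append, toggles_append _ q, toggles_append_comm h hS]

end Mesic

section Rotation

variable {α : Type*} {P : List α → Prop}

lemma iff_rotate_of_iff_rotate_one (hrot : ∀ a u, a ∉ u → (P (a :: u) ↔ P (u ++ [a])))
    {l : List α} (hl : l.Nodup) (k : ℕ) : P (l.rotate k) ↔ P l := by
  induction k with
  | zero => rw [List.rotate_zero]
  | succ k ih =>
    have hnd : (l.rotate k).Nodup := List.nodup_rotate.mpr hl
    rw [← ih, ← List.rotate_rotate]
    rcases hlk : l.rotate k with _ | ⟨a, u⟩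
    · rfl
    · rw [hlk, List.nodup_cons] at hnd
      rw [List.rotate_cons_succ, List.rotate_zero]
      exact (hrot a u hnd.1).symm

lemma iff_append_comm_of_iff_rotate_one (hrot : ∀ a u, a ∉ u → (P (a :: u) ↔ P (u ++ [a])))
    {u v : List α} (h : (u ++ v).Nodup) : P (u ++ v) ↔ P (v ++ u) := by
  rw [← List.rotate_append_length_eq u v]
  exact (iff_rotate_of_iff_rotate_one hrot h _).symm

end Rotation

section PathWords

variable {P : List ℕ → Prop}

lemma iff_range'_append_of_perm (hrot : ∀ a u, a ∉ u → (P (a :: u) ↔ P (u ++ [a])))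
    (hcomm : ∀ b s q : List ℕ, (∀ x ∈ b, ∀ y ∈ s, x + 1 ≠ y ∧ y + 1 ≠ x) →
      (P (b ++ s ++ q) ↔ P (s ++ b ++ q)))
    (j : ℕ) {u t : List ℕ} (hu : u.Perm (List.range' 1 j)) (ht : ∀ y ∈ t, j + 1 ≤ y)
    (hnd : (u ++ t).Nodup) : P (u ++ t) ↔ P (List.range' 1 j ++ t) := by
  induction j generalizing u t with
  | zero => rw [List.perm_nil.mp hu, List.range'_zero]
  | succ j ih =>
    obtain ⟨u₁, u₂, rfl⟩ := List.append_of_mem (a := j + 1) (hu.mem_iff.mpr (by simp))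
    have hsmall : ∀ x ∈ u₂, x ≤ j := by
      intro x hx
      have hne : x ≠ j + 1 := by
        rintro rfl
        have hnd' := (List.nodup_append.mp hnd).1
        rw [List.nodup_middle, List.nodup_cons] at hnd'
        exact hnd'.1 (List.mem_append_right _ hx)
      have := List.mem_range'_1.mp
        (hu.mem_iff.mp (List.mem_append_right _ (List.mem_cons_of_mem _ hx)))
      omega
    have hperm : (u₂ ++ u₁ ++ (j + 1) :: t).Perm (u₁ ++ (j + 1) :: u₂ ++ t) := by
      simp only [List.perm_iff_count, List.count_append, List.count_cons]
      intro b
      omega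
    have hu' : (u₂ ++ u₁).Perm (List.range' 1 j) := by
      rw [← List.perm_append_right_iff [j + 1], show List.range' 1 j ++ [j + 1] =
        List.range' 1 (j + 1) by simp [List.range'_concat, add_comm]]
      refine List.Perm.trans ?_ hu
      simpa using (List.perm_append_right_iff t).mp (by simpa using hperm)
    calc P (u₁ ++ (j + 1) :: u₂ ++ t)
        ↔ P (u₂ ++ t ++ (u₁ ++ [j + 1])) := by
          simpa using iff_append_comm_of_iff_rotate_one hrot (u := u₁ ++ [j + 1]) (v := u₂ ++ t)
            (by simpa using hnd)
      _ ↔ P (t ++ u₂ ++ (u₁ ++ [j + 1])) :=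
          hcomm _ _ _ fun x hx y hy => by have := hsmall x hx; have := ht y hy; omega
      _ ↔ P (u₂ ++ u₁ ++ (j + 1) :: t) := by
          simpa using iff_append_comm_of_iff_rotate_one hrot (u := t) (v := u₂ ++ u₁ ++ [j + 1])
            (List.perm_append_comm.nodup_iff.mpr (by simpa using hperm.nodup_iff.mpr hnd))
      _ ↔ P (List.range' 1 (j + 1) ++ t) := by
          simpa [List.range'_concat, add_comm] using
            ih hu' (by simpa using fun y hy => by have := ht y hy; omega)
              (hperm.nodup_iff.mpr hnd)

end PathWords

lemma List.ofFn_succ_eq_range' (n : ℕ) :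
    List.ofFn (fun i : Fin n => (i : ℕ) + 1) = List.range' 1 n := by
  apply List.ext_getElem <;> simp [add_comm]

lemma ofFn_perm_range' {n : ℕ} (σ : Equiv.Perm (Fin n)) :
    (List.ofFn fun i : Fin n => (σ i : ℕ) + 1).Perm (List.range' 1 n) :=
  List.ofFn_succ_eq_range' n ▸ σ.ofFn_comp_perm fun i : Fin n => (i : ℕ) + 1

lemma isMesic_toggles_iff_of_perm {R : Type*} [Ring R] {n : ℕ} {cf : ℕ → R} {c : R}
    {l : List ℕ} (hl : l.Perm (List.range' 1 n)) :
    IsMesic {S | IndepSet n S} (toggles n l) (fun S => ∑ j ∈ S, cf j) c ↔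
      IsMesic {S | IndepSet n S} (toggles n (List.range' 1 n)) (fun S => ∑ j ∈ S, cf j) c := by
  simpa using iff_range'_append_of_perm
    (P := fun l => IsMesic {S | IndepSet n S} (toggles n l) (fun S => ∑ j ∈ S, cf j) c)
    (fun _ _ ha => isMesic_toggles_cons_iff ha) (fun _ _ q h => isMesic_toggles_append_comm h q)
    n hl (t := []) (by simp) (by simpa using hl.nodup_iff.mpr List.nodup_range')

theorem stmt3_general (n : ℕ) (σ σ' : Equiv.Perm (Fin n))
    (cf : ℕ → ℚ) (c : ℚ) :
    (∀ S : Finset ℕ, IndepSet n S → ∀ m : ℕ, 1 ≤ m → (coxeter n σ)^[m] S = S →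
        ∑ i ∈ Finset.range m, ∑ j ∈ (coxeter n σ)^[i] S, cf j = c * m) ↔
    (∀ S : Finset ℕ, IndepSet n S → ∀ m : ℕ, 1 ≤ m → (coxeter n σ')^[m] S = S →
        ∑ i ∈ Finset.range m, ∑ j ∈ (coxeter n σ')^[i] S, cf j = c * m) :=
  (isMesic_toggles_iff_of_perm (ofFn_perm_range' σ)).trans
    (isMesic_toggles_iff_of_perm (ofFn_perm_range' σ')).symm

/-- A statistic `f(S) = ∑_{j ∈ S} c_j` which is a linear combination of the indicator
functions is `c`-mesic under one Coxeter element of the toggle group of `I_n` if and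
only if it is `c`-mesic under any other. -/
theorem stmt3 (n : ℕ) (hn : 2 ≤ n) (σ σ' : Equiv.Perm (Fin n))
    (cf : ℕ → ℚ) (c : ℚ) :
    (∀ S : Finset ℕ, IndepSet n S → ∀ m : ℕ, 1 ≤ m → (coxeter n σ)^[m] S = S →
        ∑ i ∈ Finset.range m, ∑ j ∈ (coxeter n σ)^[i] S, cf j = c * m) ↔
    (∀ S : Finset ℕ, IndepSet n S → ∀ m : ℕ, 1 ≤ m → (coxeter n σ')^[m] S = S →
        ∑ i ∈ Finset.range m, ∑ j ∈ (coxeter n σ')^[i] S, cf j = c * m) :=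
  stmt3_general n σ σ' cf c
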